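/- For a monomial m in exactly w distinct variables with 1 ≤ w ≤ s < q, the Cut-HDMR approximation satisfies m̂_s = m; equivalently, ∑_{i=w}^{s} (-1)^{s-i} C(q-i-1, s-i) C(q-w, i-w) = 1. -/

import Mathlib

/-!
A monomial `m` with support `A` satisfies `m_S = m` if `A ⊆ S` and `m_S = 0` otherwise, so
`m̂_s = c · m` with `c = ∑_{i ≤ s} (-1)^(s-i) C(q-i-1, s-i) · #{S : |S| = i, A ⊆ S}`. There are
`C(q-w, i-w)` such `S`, and with `n = q - w`, `t = s - w` this becomes
`c = ∑_j (-1)^(t-j) C(n-j-1, t-j) C(n, j)`. By upper negation `(-1)^k C(n-t+k-1, k)` is the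
generalized binomial coefficient `C(-(n-t), k)`, so Chu–Vandermonde gives `c = C(t, t) = 1`.
-/

open Finset

/-- For a function `f : ℝ^q → ℝ` and a subset `S ⊆ {1,...,q}`, `cutComponent f S b` is `f`
evaluated at the vector whose coordinates in `S` equal those of `b` and whose remaining
coordinates are `0`. -/
noncomputable def cutComponent {q : ℕ} (f : (Fin q → ℝ) → ℝ) (S : Finset (Fin q))
    (b : Fin q → ℝ) : ℝ :=
  f fun k => if k ∈ S then b k else 0

/-- The `s`-variate Cut-HDMR approximation (anchored at `0`) of `f : ℝ^q → ℝ`. -/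
noncomputable def cutHDMR {q : ℕ} (s : ℕ) (f : (Fin q → ℝ) → ℝ) (b : Fin q → ℝ) : ℝ :=
  ∑ i ∈ Finset.range (s + 1),
    (-1 : ℝ) ^ (s - i) * (Nat.choose (q - i - 1) (s - i)) *
      ∑ S ∈ (Finset.univ : Finset (Fin q)).powersetCard i, cutComponent f S b

theorem sum_range_neg_one_pow_mul_choose_mul_choose {n t : ℕ} (htn : t < n) :
    ∑ j ∈ range (t + 1), (-1 : ℤ) ^ (t - j) * (n - j - 1).choose (t - j) * n.choose j = 1 := by
  have vandermonde := Ring.add_choose_eq (r := (n : ℤ)) (s := -((n - t : ℕ) : ℤ)) t (.all _ _)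
  rw [Nat.sum_antidiagonal_eq_sum_range_succ
    (fun j k => Ring.choose (n : ℤ) j * Ring.choose (-((n - t : ℕ) : ℤ)) k),
    show (n : ℤ) + -((n - t : ℕ) : ℤ) = (t : ℕ) by omega, Ring.choose_natCast,
    Nat.choose_self, Nat.cast_one] at vandermonde
  refine (sum_congr rfl fun j hj => ?_).trans vandermonde.symm
  have hupper : ((n - t : ℕ) : ℤ) + ((t - j : ℕ) : ℤ) - 1 = ((n - j - 1 : ℕ) : ℤ) := by
    have := mem_range.mp hj; omega
  rw [Ring.choose_neg, hupper, Ring.choose_natCast, Ring.choose_natCast, Units.smul_def,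
    Int.coe_negOnePow_natCast, smul_eq_mul]
  ring

theorem sum_range_neg_one_pow_mul_choose_mul_card_filter_powersetCard_subset {α R : Type*}
    [Fintype α] [DecidableEq α] [CommRing R] {s : ℕ} (hs : s < Fintype.card α) {A : Finset α} (hA : #A ≤ s) :
    ∑ i ∈ range (s + 1), (-1 : R) ^ (s - i) * ((Fintype.card α - i - 1).choose (s - i) : R) *
      #{S ∈ univ.powersetCard i | A ⊆ S} = 1 := by
  obtain ⟨t, rfl⟩ := Nat.exists_eq_add_of_le hA
  have hsmall : ∀ i ∈ range #A, #{S ∈ univ.powersetCard i | A ⊆ S} = 0 := by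
    refine fun i hi => card_eq_zero.mpr (filter_eq_empty_iff.mpr fun S hS hAS => ?_)
    have := card_le_card hAS
    rw [(mem_powersetCard.mp hS).2] at this
    exact absurd (mem_range.mp hi) this.not_gt
  have hlarge : ∀ j, #{S ∈ univ.powersetCard (#A + j) | A ⊆ S} =
      (Fintype.card α - #A).choose j := by
    intro j
    rw [card_filter_powersetCard_subset A univ _ (subset_univ A) (Nat.le_add_right _ _), card_univ,
      Nat.add_sub_cancel_left]
  rw [add_assoc, sum_range_add,
    sum_eq_zero fun i hi => by rw [hsmall i hi, Nat.cast_zero, mul_zero], zero_add]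
  simp only [hlarge, Nat.sub_add_eq, Nat.add_sub_cancel_left]
  exact_mod_cast congrArg (Int.cast : ℤ → R)
    (sum_range_neg_one_pow_mul_choose_mul_choose (n := Fintype.card α - #A) (t := t) (by omega))

theorem cutComponent_monomial {q : ℕ} (a : Fin q →₀ ℕ) (S : Finset (Fin q)) (b : Fin q → ℝ) :
    cutComponent (fun x => ∏ k, x k ^ a k) S b
      = if a.support ⊆ S then ∏ k, b k ^ a k else 0 := by
  simp only [cutComponent]
  split_ifs with h
  · refine prod_congr rfl fun k _ => ?_
    by_cases hk : k ∈ S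
    · rw [if_pos hk]
    · rw [if_neg hk, Finsupp.notMem_support_iff.mp fun hk' => hk (h hk'), pow_zero, pow_zero]
  · obtain ⟨k, hk, hkS⟩ := not_subset.mp h
    exact prod_eq_zero (mem_univ k) (by rw [if_neg hkS, zero_pow (Finsupp.mem_support_iff.mp hk)])

theorem sum_powersetCard_cutComponent_monomial {q : ℕ} (a : Fin q →₀ ℕ) (i : ℕ) (b : Fin q → ℝ) :
    ∑ S ∈ univ.powersetCard i, cutComponent (fun x => ∏ k, x k ^ a k) S b
      = #{S ∈ univ.powersetCard i | a.support ⊆ S} * ∏ k, b k ^ a k := by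
  simp only [cutComponent_monomial, sum_ite, sum_const_zero, add_zero, sum_const, nsmul_eq_mul]

theorem cutHDMR_monomial_low_interaction_general (q s w : ℕ) (hsq : s < q)
    (a : Fin q →₀ ℕ) (hw : a.support.card = w) (hws : w ≤ s) (b : Fin q → ℝ) :
    cutHDMR s (fun x => ∏ k, x k ^ a k) b = ∏ k, b k ^ a k := by
  have hweights := sum_range_neg_one_pow_mul_choose_mul_card_filter_powersetCard_subset (R := ℝ)
    (by rwa [Fintype.card_fin]) (hw ▸ hws : #a.support ≤ s)
  rw [Fintype.card_fin] at hweights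
  simp only [cutHDMR, sum_powersetCard_cutComponent_monomial, ← mul_assoc, ← sum_mul, hweights,
    one_mul]

/-- For a monomial `m(b) = ∏ b_k^{a_k}` in exactly `w` distinct variables with
`1 ≤ w ≤ s < q`, the Cut-HDMR approximation reproduces it exactly: `m̂_s = m`. -/
theorem cutHDMR_monomial_low_interaction (q s w : ℕ) (hsq : s < q)
    (a : Fin q →₀ ℕ) (hw : a.support.card = w) (hw1 : 1 ≤ w) (hws : w ≤ s) (b : Fin q → ℝ) :
    cutHDMR s (fun x => ∏ k, x k ^ a k) b = ∏ k, b k ^ a k :=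
  cutHDMR_monomial_low_interaction_general q s w hsq a hw hws b
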